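/- Let (b_n, ∘) be a compatible anti-pre-Lie algebraic structure on b_n (n ≥ 2) satisfying the grading conditions x∘y, y∘x ∈ span{z₁,...,z_n}, z_i∘x ∈ ℂx, z_i∘y ∈ ℂy, z_i∘z_j ∈ span{z₁,...,z_n}, x∘x = y∘y = 0. Then the following hold: z₁∘x = −2x, x∘z₁ = −4x, z₁∘y = 2y, y∘z₁ = 4y, z₂∘x = x, x∘z₂ = 2x, z₂∘y = −y, y∘z₂ = −2y, x∘y = (1/2)z₁, y∘x = −(1/2)z₁, z₁∘z_i = z_i∘z₁ = 0 for all 1 ≤ i ≤ n, and z_j∘x = x∘z_j = z_j∘y = y∘z_j = 0 for all 3 ≤ j ≤ n. -/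
import Mathlib


/-- Proposition V2(n-1)V0: For a compatible anti-pre-Lie algebraic
structure on `b_n` (`n ≥ 2`) satisfying the grading conditions, all the products are
determined: `z₁∘x = −2x`, `x∘z₁ = −4x`, `z₁∘y = 2y`, `y∘z₁ = 4y`, `z₂∘x = x`,
`x∘z₂ = 2x`, `z₂∘y = −y`, `y∘z₂ = −2y`, `x∘y = (1/2)z₁`, `y∘x = −(1/2)z₁`,
`z₁∘z_i = z_i∘z₁ = 0` for all `i`, and `z_j∘x = x∘z_j = z_j∘y = y∘z_j = 0` for `j ≥ 3`. -/
theorem stmt8 {g : Type*} [LieRing g] [LieAlgebra ℂ g]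
    (n : ℕ) (hn : 2 ≤ n) (x y : g) (z : Fin n → g)
    (hindep : LinearIndependent ℂ (Sum.elim ![x, y] z))
    (hspan : Submodule.span ℂ (Set.range (Sum.elim ![x, y] z)) = ⊤)
    (z₁ z₂ : g) (hz₁ : z₁ = z ⟨0, by omega⟩) (hz₂ : z₂ = z ⟨1, by omega⟩)
    (hb1 : ⁅z₁, x⁆ = (2 : ℂ) • x) (hb2 : ⁅z₁, y⁆ = (-2 : ℂ) • y) (hb3 : ⁅x, y⁆ = z₁)
    (hb4 : ⁅z₂, x⁆ = -x) (hb5 : ⁅z₂, y⁆ = y)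
    (hb6 : ∀ i j : Fin n, ⁅z i, z j⁆ = 0)
    (hb7 : ∀ i : Fin n, 2 ≤ (i : ℕ) → ∀ a : g, ⁅z i, a⁆ = 0)
    (c : g →ₗ[ℂ] g →ₗ[ℂ] g)
    (hcompat : ∀ a b : g, c a b - c b a = ⁅a, b⁆)
    (hapl : ∀ a b d : g, c a (c b d) - c b (c a d) = c ⁅b, a⁆ d)
    (hxy : c x y ∈ Submodule.span ℂ (Set.range z))
    (hyx : c y x ∈ Submodule.span ℂ (Set.range z))
    (hzx : ∀ i, c (z i) x ∈ Submodule.span ℂ {x})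
    (hzy : ∀ i, c (z i) y ∈ Submodule.span ℂ {y})
    (hzz : ∀ i j, c (z i) (z j) ∈ Submodule.span ℂ (Set.range z))
    (hxx : c x x = 0) (hyy : c y y = 0) :
    c z₁ x = (-2 : ℂ) • x ∧ c x z₁ = (-4 : ℂ) • x ∧
    c z₁ y = (2 : ℂ) • y ∧ c y z₁ = (4 : ℂ) • y ∧
    c z₂ x = x ∧ c x z₂ = (2 : ℂ) • x ∧
    c z₂ y = -y ∧ c y z₂ = (-2 : ℂ) • y ∧
    c x y = (1/2 : ℂ) • z₁ ∧ c y x = (-(1/2) : ℂ) • z₁ ∧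
    (∀ i : Fin n, c z₁ (z i) = 0 ∧ c (z i) z₁ = 0) ∧
    (∀ j : Fin n, 2 ≤ (j : ℕ) →
      c (z j) x = 0 ∧ c x (z j) = 0 ∧ c (z j) y = 0 ∧ c y (z j) = 0) := by
  obtain ⟨i0, hi0⟩ : ∃ i : Fin n, (i : ℕ) = 0 := ⟨⟨0, by omega⟩, rfl⟩
  obtain ⟨i1, hi1⟩ : ∃ i : Fin n, (i : ℕ) = 1 := ⟨⟨1, by omega⟩, rfl⟩
  have hz1 : z₁ = z i0 := by rw [hz₁]; exact congrArg z (Fin.ext (by simp [hi0])).symm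
  have hz2 : z₂ = z i1 := by rw [hz₂]; exact congrArg z (Fin.ext (by simp [hi1])).symm
  subst hz1; subst hz2
  -- basic nonvanishing
  have hxne : x ≠ 0 := by
    have := hindep.ne_zero (Sum.inl 0); simpa using this
  have hyne : y ≠ 0 := by
    have := hindep.ne_zero (Sum.inl 1); simpa using this
  have hz0ne : z i0 ≠ 0 := by
    have := hindep.ne_zero (Sum.inr i0); simpa using this
  have cancel : ∀ (w : g), w ≠ 0 → ∀ s t : ℂ, s • w = t • w → s = t := by
    intro w hw s t h
    by_contra hst
    rcases smul_eq_zero.mp (show (s - t) • w = 0 by rw [sub_smul, h, sub_self]) with h' | h'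
    · exact hst (sub_eq_zero.mp h')
    · exact hw h'
  -- coefficients
  have hax : ∀ k, ∃ ak : ℂ, c (z k) x = ak • x := by
    intro k
    obtain ⟨ak, hak⟩ := Submodule.mem_span_singleton.mp (hzx k)
    exact ⟨ak, hak.symm⟩
  choose a ha using hax
  have hby : ∀ k, ∃ bk : ℂ, c (z k) y = bk • y := by
    intro k
    obtain ⟨bk, hbk⟩ := Submodule.mem_span_singleton.mp (hzy k)
    exact ⟨bk, hbk.symm⟩
  choose b hb using hby
  -- bracket coefficients
  have hbr : ∀ k : Fin n, ∃ pk : ℂ, ⁅z k, x⁆ = pk • x ∧ ⁅z k, y⁆ = (-pk) • y ∧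
      ((k : ℕ) = 0 → pk = 2) ∧ ((k : ℕ) = 1 → pk = -1) ∧ (2 ≤ (k : ℕ) → pk = 0) := by
    intro k
    rcases Nat.lt_or_ge (k : ℕ) 2 with hk | hk
    · rcases Nat.lt_or_ge (k : ℕ) 1 with hk0 | hk1
      · have hki : k = i0 := Fin.ext (by omega)
        subst hki
        exact ⟨2, hb1, by rw [hb2], fun _ => rfl,
          fun h => absurd h (by omega), fun h => absurd h (by omega)⟩
      · have hki : k = i1 := Fin.ext (by omega)
        subst hki
        exact ⟨-1, by rw [hb4]; module, by rw [hb5]; module,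
          fun h => absurd h (by omega), fun _ => rfl, fun h => absurd h (by omega)⟩
    · exact ⟨0, by simp [hb7 k hk], by simp [hb7 k hk],
        fun h => absurd h (by omega), fun h => absurd h (by omega), fun _ => rfl⟩
  choose p hpx hpy hp0 hp1 hp2 using hbr
  have hpi0 : p i0 = 2 := hp0 i0 hi0
  have hpi1 : p i1 = -1 := hp1 i1 hi1
  -- products with x, y on the left
  have hcxz : ∀ k, c x (z k) = (a k - p k) • x := by
    intro k
    have h := hcompat x (z k)
    rw [ha k, ← lie_skew, hpx k] at h
    linear_combination (norm := module) h
  have hcyz : ∀ k, c y (z k) = (b k + p k) • y := by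
    intro k
    have h := hcompat y (z k)
    rw [hb k, ← lie_skew, hpy k] at h
    linear_combination (norm := module) h
  have hXY : c x y - c y x = z i0 := by
    have h := hcompat x y; rwa [hb3] at h
  have hcxY : c x (c y x) = (-(a i0)) • x := by
    have h := hapl y x x
    rw [hxx, map_zero, hb3, ha i0] at h
    linear_combination (norm := module) -h
  have hcyX : c y (c x y) = b i0 • y := by
    have h := hapl x y y
    rw [hyy, map_zero] at h
    have hyx' : ⁅y, x⁆ = -(z i0) := by rw [← lie_skew, hb3]
    rw [hyx', map_neg, LinearMap.neg_apply, hb i0] at h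
    linear_combination (norm := module) -h
  have hcxX : c x (c x y) = (-2 : ℂ) • x := by
    have h1 : c x y = c y x + z i0 := by linear_combination (norm := module) hXY
    rw [h1, map_add, hcxY, hcxz i0, hpi0]
    module
  have hcyY : c y (c y x) = (-2 : ℂ) • y := by
    have h1 : c y x = c x y - z i0 := by linear_combination (norm := module) -hXY
    rw [h1, map_sub, hcyX, hcyz i0, hpi0]
    module
  -- c z0 (z k)
  have hW : ∀ k, c (z i0) (z k) = (a k - p k) • (c y x) - (b k + p k) • (c x y) := by
    intro k
    have h := hapl x y (z k)
    rw [hcyz k, hcxz k] at h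
    simp only [map_smul] at h
    have hyx' : ⁅y, x⁆ = -(z i0) := by rw [← lie_skew, hb3]
    rw [hyx', map_neg, LinearMap.neg_apply] at h
    linear_combination (norm := module) h
  -- span expansions
  obtain ⟨u, hu⟩ := (Submodule.mem_span_range_iff_exists_fun ℂ).mp hxy
  obtain ⟨v, hv⟩ := (Submodule.mem_span_range_iff_exists_fun ℂ).mp hyx
  have sumx : ∀ coef : Fin n → ℂ,
      c x (∑ i, coef i • z i) = (∑ i, coef i * (a i - p i)) • x := by
    intro coef
    rw [map_sum, Finset.sum_smul]
    exact Finset.sum_congr rfl fun i _ => by rw [map_smul, hcxz i, smul_smul]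
  have sumy : ∀ coef : Fin n → ℂ,
      c y (∑ i, coef i • z i) = (∑ i, coef i * (b i + p i)) • y := by
    intro coef
    rw [map_sum, Finset.sum_smul]
    exact Finset.sum_congr rfl fun i _ => by rw [map_smul, hcyz i, smul_smul]
  have sumz : ∀ coef : Fin n → ℂ,
      c (z i0) (∑ i, coef i • z i) =
        (∑ i, coef i * (a i - p i)) • (c y x) - (∑ i, coef i * (b i + p i)) • (c x y) := by
    intro coef
    rw [map_sum, Finset.sum_smul, Finset.sum_smul, ← Finset.sum_sub_distrib]
    exact Finset.sum_congr rfl fun i _ => by rw [map_smul, hW i, smul_sub, smul_smul, smul_smul]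
  have hSuA : (∑ i, u i * (a i - p i)) = -2 := by
    apply cancel x hxne
    rw [← sumx u, hu]; exact hcxX
  have hSuB : (∑ i, u i * (b i + p i)) = b i0 := by
    apply cancel y hyne
    rw [← sumy u, hu]; exact hcyX
  have hSvA : (∑ i, v i * (a i - p i)) = -(a i0) := by
    apply cancel x hxne
    rw [← sumx v, hv]; exact hcxY
  have hSvB : (∑ i, v i * (b i + p i)) = -2 := by
    apply cancel y hyne
    rw [← sumy v, hv]; exact hcyY
  -- key identity I : b0 • (c x y) = z0
  have hI : b i0 • (c x y) = z i0 := by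
    have h := hapl (z i0) x y
    rw [hb i0] at h
    have hbr2 : ⁅x, z i0⁆ = -((2 : ℂ) • x) := by rw [← lie_skew, hpx i0, hpi0]
    rw [hbr2] at h
    simp only [map_smul, map_neg, LinearMap.neg_apply, LinearMap.smul_apply] at h
    have h2 := sumz u
    rw [hu, hSuA, hSuB] at h2
    linear_combination (norm := module) (-(1/2) : ℂ) • h + ((1/2) : ℂ) • h2 + hXY
  have hXne : c x y ≠ 0 := fun h => hz0ne (by rw [← hI, h, smul_zero])
  -- key identity II : 2 • (c x y) = (2 a0 + 2) • (c y x)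
  have hII : (2 : ℂ) • (c x y) = (2 * a i0 + 2) • (c y x) := by
    have h := hapl (z i0) y x
    rw [ha i0] at h
    have hbr3 : ⁅y, z i0⁆ = (2 : ℂ) • y := by
      rw [← lie_skew, hpy i0, hpi0]; module
    rw [hbr3] at h
    simp only [map_smul, LinearMap.smul_apply] at h
    have h2 := sumz v
    rw [hv, hSvA, hSvB] at h2
    linear_combination (norm := module) h - h2
  have hYX : c y x = (1 - b i0) • (c x y) := by
    linear_combination (norm := module) hI - hXY
  have hP1 : (2 : ℂ) = (2 * a i0 + 2) * (1 - b i0) := by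
    apply cancel (c x y) hXne
    rw [hII, hYX, smul_smul]
  have hP2 : b i0 * (-2) = a i0 - 2 := by
    have h := congrArg (c x) hI
    rw [map_smul, hcxX, hcxz i0, hpi0, smul_smul] at h
    exact cancel x hxne _ _ h
  have hP3 : b i0 * b i0 = b i0 + 2 := by
    have h := congrArg (c y) hI
    rw [map_smul, hcyX, hcyz i0, hpi0, smul_smul] at h
    exact cancel y hyne _ _ h
  have hb0 : b i0 = 2 := by
    linear_combination (1/6) * hP1 - ((1 - b i0)/3) * hP2 + (2/3) * hP3
  have ha0 : a i0 = -2 := by linear_combination -hP2 - 2 * hb0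
  have hXval : c x y = (1/2 : ℂ) • z i0 := by
    rw [hb0] at hI
    linear_combination (norm := module) ((1/2) : ℂ) • hI
  have hYval : c y x = (-(1/2) : ℂ) • z i0 := by
    linear_combination (norm := module) hXval - hXY
  have hWz : ∀ k, c (z i0) (z k) = (-(a k + b k)/2) • z i0 := by
    intro k
    rw [hW k, hXval, hYval, smul_smul, smul_smul]
    module
  have hsym : ∀ k, c (z k) (z i0) = c (z i0) (z k) := by
    intro k
    have h := hcompat (z k) (z i0)
    rw [hb6 k i0] at h
    linear_combination (norm := module) h
  have hE7 : ∀ k, b k = -(a k) := by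
    intro k
    have h := hapl x (z i0) (z k)
    rw [hWz k, hcxz k, hpx i0, hpi0] at h
    simp only [map_smul, LinearMap.smul_apply] at h
    rw [hcxz i0, hcxz k, ha i0, hpi0, ha0] at h
    simp only [smul_smul, ← sub_smul] at h
    have hs := cancel x hxne _ _ h
    linear_combination hs / 2
  have hE8 : ∀ k, b k = p k := by
    intro k
    have h := hapl (z k) x y
    rw [hb k] at h
    have hbr4 : ⁅x, z k⁆ = (-(p k)) • x := by
      rw [← lie_skew, hpx k]; module
    rw [hbr4] at h
    simp only [map_smul, LinearMap.smul_apply] at h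
    have hzkX : c (z k) (c x y) = 0 := by
      rw [hXval, map_smul, hsym k, hWz k, hE7 k]
      module
    rw [hzkX] at h
    have h' : (-(b k)) • (c x y) = (-(p k)) • (c x y) := by
      linear_combination (norm := module) h
    have hs := cancel (c x y) hXne _ _ h'
    linear_combination -hs
  have hak : ∀ k, a k = -(p k) := fun k => by linear_combination hE7 k - hE8 k
  refine ⟨?_, ?_, ?_, ?_, ?_, ?_, ?_, ?_, hXval, hYval, ?_, ?_⟩
  · rw [ha i0, ha0]
  · rw [hcxz i0, ha0, hpi0]; norm_num
  · rw [hb i0, hb0]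
  · rw [hcyz i0, hb0, hpi0]; norm_num
  · rw [ha i1, hak i1, hpi1]; norm_num
  · rw [hcxz i1, hak i1, hpi1]; norm_num
  · rw [hb i1, hE8 i1, hpi1]; norm_num
  · rw [hcyz i1, hE8 i1, hpi1]; norm_num
  · intro i
    refine ⟨?_, ?_⟩
    · rw [hWz i, hE7 i]; module
    · rw [hsym i, hWz i, hE7 i]; module
  · intro j hj
    have hpj : p j = 0 := hp2 j hj
    refine ⟨?_, ?_, ?_, ?_⟩
    · rw [ha j, hak j, hpj]; simp
    · rw [hcxz j, hak j, hpj]; simp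
    · rw [hb j, hE8 j, hpj]; simp
    · rw [hcyz j, hE8 j, hpj]; simp
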